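/- arXiv:0807.1407 — 2 statements merged into one kernel-verified Lean document; each statement's English description precedes it below -/
import Mathlib

section
/- For every l ∈ R^×, the subset l·R̂ = { l·x : x ∈ R̂ } is both open and closed in R̂. -/
/-! The profinite completion `R̂` of an integral domain `R` (not a field, with all
nonzero principal ideals of finite index) is a compact topological space. -/

/-- The index set `R^× = R \ {0}`. -/
abbrev Rx (R : Type*) [CommRing R] := {m : R // m ≠ 0}

/-- Each finite quotient `R/(m)` carries the discrete topology. -/
instance quotTop (R : Type*) [CommRing R] (m : R) :
    TopologicalSpace (R ⧸ Ideal.span {m}) := ⊥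

theorem span_mul_le (R : Type*) [CommRing R] (l m : R) :
    Ideal.span {l * m} ≤ Ideal.span {m} :=
  Ideal.span_singleton_le_span_singleton.mpr (dvd_mul_left m l)

/-- The profinite completion `R̂` of `R`, as a subring of the product of the
quotients `R/(m)`, `m ∈ R^×`, consisting of the compatible families. -/
def Rhat (R : Type*) [CommRing R] [IsDomain R] :
    Subring (∀ m : Rx R, R ⧸ Ideal.span {(m : R)}) where
  carrier := {x | ∀ l m : Rx R,
    Ideal.Quotient.factor (span_mul_le R l m)
      (x ⟨(l : R) * m, mul_ne_zero l.2 m.2⟩) = x m}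
  mul_mem' {a b} ha hb := by
    intro l m
    rw [Pi.mul_apply, Pi.mul_apply, map_mul, ha l m, hb l m]
  one_mem' := by
    intro l m
    rw [Pi.one_apply, Pi.one_apply, map_one]
  add_mem' {a b} ha hb := by
    intro l m
    rw [Pi.add_apply, Pi.add_apply, map_add, ha l m, hb l m]
  zero_mem' := by
    intro l m
    rw [Pi.zero_apply, Pi.zero_apply, map_zero]
  neg_mem' {a} ha := by
    intro l m
    rw [Pi.neg_apply, Pi.neg_apply, map_neg, ha l m]

/-- The diagonal map `R → R̂`, `r ↦ (r + (m))_m`, as a ring homomorphism. -/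
def diagHom (R : Type*) [CommRing R] [IsDomain R] : R →+* Rhat R :=
  (Pi.ringHom fun m : Rx R => Ideal.Quotient.mk (Ideal.span {(m : R)})).codRestrict
    (Rhat R) (fun r l m => by
      rfl)
/-- The canonical projection `π_l : R̂ → R/(l)`, `(r_m)_m ↦ r_l`. -/
def projHom (R : Type*) [CommRing R] [IsDomain R] (l : R) (hl : l ≠ 0) :
    Rhat R →+* R ⧸ Ideal.span {l} :=
  (Pi.evalRingHom (fun m : Rx R => R ⧸ Ideal.span {(m : R)}) ⟨l, hl⟩).comp
    (Rhat R).subtype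
lemma apply_index_congr {R : Type*} [CommRing R]
    (x : ∀ m : Rx R, R ⧸ Ideal.span {(m : R)}) {n n' : Rx R} (h : n = n') (r : R)
    (hx : x n = Ideal.Quotient.mk (Ideal.span {(n : R)}) r) :
    x n' = Ideal.Quotient.mk (Ideal.span {(n' : R)}) r := by
  subst h; exact hx

lemma key (R : Type*) [CommRing R] [IsDomain R]
    (l : R) (hl : l ≠ 0) (y : Rhat R) (hy : projHom R l hl y = 0) :
    ∃ x : Rhat R, y = diagHom R l * x := by
  have hc : ∀ a b : Rx R,
      Ideal.Quotient.factor (span_mul_le R (a:R) (b:R))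
        ((y : ∀ m : Rx R, R ⧸ Ideal.span {(m : R)}) ⟨(a : R) * b, mul_ne_zero a.2 b.2⟩)
        = (y : ∀ m : Rx R, R ⧸ Ideal.span {(m : R)}) b := y.2
  have hy0 : (y : ∀ m : Rx R, R ⧸ Ideal.span {(m : R)}) ⟨l, hl⟩ = 0 := hy
  have hz : ∀ m : Rx R, ∃ z : R,
      (y : ∀ m : Rx R, R ⧸ Ideal.span {(m : R)}) ⟨l * m, mul_ne_zero hl m.2⟩
        = Ideal.Quotient.mk _ (l * z) := by
    intro m
    obtain ⟨r, hr⟩ := Ideal.Quotient.mk_surjective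
      ((y : ∀ m : Rx R, R ⧸ Ideal.span {(m : R)}) ⟨(m : R) * l, mul_ne_zero m.2 hl⟩)
    have h1 := hc m ⟨l, hl⟩
    rw [← hr, Ideal.Quotient.factor_mk, hy0] at h1
    obtain ⟨z, hzz⟩ : l ∣ r :=
      Ideal.mem_span_singleton.mp (Ideal.Quotient.eq_zero_iff_mem.mp h1)
    exact ⟨z, apply_index_congr _ (Subtype.ext (mul_comm (m : R) l)) _ (by rw [← hr, hzz])⟩
  choose z hzspec using hz
  have hxmem : (fun m : Rx R => Ideal.Quotient.mk (Ideal.span {(m : R)}) (z m)) ∈ Rhat R := by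
    intro a b
    rw [Ideal.Quotient.factor_mk, Ideal.Quotient.eq, Ideal.mem_span_singleton]
    have h1 := apply_index_congr _
      (Subtype.ext (mul_left_comm l (a : R) (b : R)) :
        (⟨l * ((a : R) * b), mul_ne_zero hl (mul_ne_zero a.2 b.2)⟩ : Rx R)
          = ⟨(a : R) * (l * b), mul_ne_zero a.2 (mul_ne_zero hl b.2)⟩) _
      (hzspec ⟨(a : R) * b, mul_ne_zero a.2 b.2⟩)
    have h2 := hzspec b
    have h3 := hc a ⟨l * b, mul_ne_zero hl b.2⟩
    rw [h1, Ideal.Quotient.factor_mk, h2] at h3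
    have h4 : (l * (b : R)) ∣ (l * z ⟨(a : R) * b, mul_ne_zero a.2 b.2⟩ - l * z b) :=
      Ideal.mem_span_singleton.mp (Ideal.Quotient.eq.mp h3)
    rw [← mul_sub] at h4
    exact (mul_dvd_mul_iff_left hl).mp h4
  refine ⟨⟨_, hxmem⟩, ?_⟩
  ext m
  have h2 := hc ⟨l, hl⟩ m
  rw [hzspec m, Ideal.Quotient.factor_mk] at h2
  show (y : ∀ m : Rx R, R ⧸ Ideal.span {(m : R)}) m
    = Ideal.Quotient.mk _ l * Ideal.Quotient.mk _ (z m)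
  rw [← map_mul, ← h2]


/-- for every `l ∈ R^×`, the subset `l·R̂ = { l·x : x ∈ R̂ }` is both open
and closed in `R̂` (with its topology as a subspace of the product of the finite
discrete rings `R/(m)`). -/
theorem lRhat_isOpen_isClosed (R : Type*) [CommRing R] [IsDomain R]
    (hnf : ¬ IsField R)
    (hfin : ∀ m : R, m ≠ 0 → Finite (R ⧸ Ideal.span {m}))
    (l : R) (hl : l ≠ 0) :
    IsOpen {y : Rhat R | ∃ x : Rhat R, y = diagHom R l * x} ∧
      IsClosed {y : Rhat R | ∃ x : Rhat R, y = diagHom R l * x} := by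
  set π := projHom R l hl with hπ
  set S := {y : Rhat R | ∃ x : Rhat R, y = diagHom R l * x} with hSdef
  have hcont : Continuous π := by
    show Continuous fun y : Rhat R =>
      (y : ∀ m : Rx R, R ⧸ Ideal.span {(m : R)}) ⟨l, hl⟩
    exact (continuous_apply _).comp continuous_subtype_val
  have hdisc : DiscreteTopology (R ⧸ Ideal.span {l}) := ⟨rfl⟩
  have hS : S = π ⁻¹' (π '' S) := by
    apply Set.Subset.antisymm (Set.subset_preimage_image π S)
    rintro y ⟨s, hs, hps⟩
    obtain ⟨x, hx⟩ := hs
    obtain ⟨x', hx'⟩ := key R l hl (y - s) (by rw [π.map_sub, hps, sub_self])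
    exact ⟨x + x', by rw [mul_add, ← hx, ← hx']; ring⟩
  constructor
  · rw [hS]; exact (isOpen_discrete _).preimage hcont
  · rw [← isOpen_compl_iff, hS, ← Set.preimage_compl]
    exact (isOpen_discrete _).preimage hcont
end

section
/- If the class number of K equals 1 and K has at most one real place, then 𝔸_K^× = K^× · K_{∞,+}^× · 𝔬̂^*, i.e. every idele can be written as a product of a diagonally embedded element of K^×, an element of K_{∞,+}^×, and an element of 𝔬̂^*. -/
set_option synthInstance.maxHeartbeats 1000000
set_option maxHeartbeats 1000000

open NumberField IsDedekindDomain
open scoped Pointwise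

/-- The diagonal embedding of `K^×` into the idele group `𝔸_K^×`. -/
def KDiag (K : Type*) [Field K] [NumberField K] : Set (AdeleRing (𝓞 K) K)ˣ :=
  Set.range (Units.map (algebraMap K (AdeleRing (𝓞 K) K)).toMonoidHom)

/-- `K_∞^×`: the subgroup of ideles whose component at every finite place is `1`. -/
def KInf (K : Type*) [Field K] [NumberField K] : Set (AdeleRing (𝓞 K) K)ˣ :=
  {x : (AdeleRing (𝓞 K) K)ˣ | ((x : AdeleRing (𝓞 K) K)).2 = 1}

/-- `K_{∞,+}^×`: the ideles whose component at every finite place is `1` and whose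
component at every real place is positive. -/
def KInfPlus (K : Type*) [Field K] [NumberField K] : Set (AdeleRing (𝓞 K) K)ˣ :=
  {x : (AdeleRing (𝓞 K) K)ˣ | ((x : AdeleRing (𝓞 K) K)).2 = 1 ∧
    ∀ (v : InfinitePlace K) (hv : v.IsReal),
      0 < InfinitePlace.Completion.extensionEmbeddingOfIsReal hv
        (((x : AdeleRing (𝓞 K) K)).1 v)}

/-- `𝔬̂^* = ∏_v 𝔬_v^*`: the ideles whose component at every infinite place is `1` and
whose component at each finite place `v` is a unit of the valuation ring `𝔬_v`. -/
def OhatStar (K : Type*) [Field K] [NumberField K] : Set (AdeleRing (𝓞 K) K)ˣ :=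
  {x : (AdeleRing (𝓞 K) K)ˣ | ((x : AdeleRing (𝓞 K) K)).1 = 1 ∧
    ∀ v : HeightOneSpectrum (𝓞 K), ∃ u : (v.adicCompletionIntegers K)ˣ,
      (((x : AdeleRing (𝓞 K) K)).2 : (v : HeightOneSpectrum (𝓞 K)) → v.adicCompletion K) v =
        ((u : v.adicCompletionIntegers K) : v.adicCompletion K)}

/-- `U`: the closure of `K^× · K_{∞,+}^×` in the idele group. -/
def Uclosure (K : Type*) [Field K] [NumberField K] : Set (AdeleRing (𝓞 K) K)ˣ :=
  closure (KDiag K * KInfPlus K)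

section Helpers

open IsDedekindDomain

private lemma gen_intValuation_eq_one {R : Type*} [CommRing R] [IsDedekindDomain R]
    {v w : HeightOneSpectrum R}
    (hne : w ≠ v) {π : R} (hπ : v.asIdeal = Ideal.span {π}) : w.intValuation π = 1 := by
  rw [HeightOneSpectrum.intValuation_apply]
  rcases lt_or_eq_of_le (w.intValuation_le_one π) with h | h
  · exfalso
    rw [w.intValuation_lt_one_iff_dvd, ← hπ] at h
    have hle : v.asIdeal ≤ w.asIdeal := Ideal.le_of_dvd h
    have hmax : v.asIdeal.IsMaximal := Ideal.IsPrime.isMaximal v.isPrime v.ne_bot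
    exact hne (HeightOneSpectrum.ext (hmax.eq_of_le w.isPrime.ne_top hle).symm)
  · exact h


private lemma exists_valuation_match (K : Type*) [Field K] [NumberField K]
    (hPID : IsPrincipalIdealRing (𝓞 K)) (xf yf : FiniteAdeleRing (𝓞 K) K)
    (hxy : xf * yf = 1) :
    ∃ k : K, k ≠ 0 ∧ ∀ w : HeightOneSpectrum (𝓞 K),
      w.valuation K k = Valued.v ((xf : (v : HeightOneSpectrum (𝓞 K)) → v.adicCompletion K) w) := by
  haveI := hPID
  have hcomp : ∀ v, (xf : (v : HeightOneSpectrum (𝓞 K)) → v.adicCompletion K) v * (yf : (v : HeightOneSpectrum (𝓞 K)) → v.adicCompletion K) v = 1 :=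
    fun v => congrFun (congrArg Subtype.val hxy) v
  have hne : ∀ v, (xf : (v : HeightOneSpectrum (𝓞 K)) → v.adicCompletion K) v ≠ 0 :=
    fun v => left_ne_zero_of_mul_eq_one (hcomp v)
  have hvne : ∀ v, (Valued.v ((xf : (v : HeightOneSpectrum (𝓞 K)) → v.adicCompletion K) v) : WithZero (Multiplicative ℤ)) ≠ 0 :=
    fun v => (Valuation.ne_zero_iff _).2 (hne v)
  -- finiteness of the support
  have hS : {v : HeightOneSpectrum (𝓞 K) |
      ¬ (Valued.v ((xf : (v : HeightOneSpectrum (𝓞 K)) → v.adicCompletion K) v) : WithZero (Multiplicative ℤ)) = 1}.Finite := by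
    rw [← Filter.eventually_cofinite]
    filter_upwards [xf.2, yf.2] with v h1 h2
    rw [SetLike.mem_coe, HeightOneSpectrum.mem_adicCompletionIntegers] at h1 h2
    refine le_antisymm h1 ?_
    calc (1 : WithZero (Multiplicative ℤ)) = Valued.v ((xf : (v : HeightOneSpectrum (𝓞 K)) → v.adicCompletion K) v) * Valued.v ((yf : (v : HeightOneSpectrum (𝓞 K)) → v.adicCompletion K) v) := by
          rw [← Valuation.map_mul, hcomp v, Valuation.map_one]
      _ ≤ Valued.v ((xf : (v : HeightOneSpectrum (𝓞 K)) → v.adicCompletion K) v) * 1 := mul_le_mul_right h2 _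
      _ = Valued.v ((xf : (v : HeightOneSpectrum (𝓞 K)) → v.adicCompletion K) v) := mul_one _
  set n : HeightOneSpectrum (𝓞 K) → ℤ :=
    fun v => - Multiplicative.toAdd (WithZero.unzero (hvne v)) with hn_def
  have hn : ∀ v, (Valued.v ((xf : (v : HeightOneSpectrum (𝓞 K)) → v.adicCompletion K) v) : WithZero (Multiplicative ℤ)) = Multiplicative.ofAdd (-(n v)) := by
    intro v
    rw [hn_def]
    simp only [neg_neg, ofAdd_toAdd, WithZero.coe_unzero]
  have hn0 : ∀ v, v ∉ hS.toFinset → n v = 0 := by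
    intro v hv
    rw [Set.Finite.mem_toFinset, Set.mem_setOf_eq, not_not] at hv
    have := (hn v).symm.trans hv
    rwa [show (1 : WithZero (Multiplicative ℤ)) = ((1 : Multiplicative ℤ) : WithZero (Multiplicative ℤ)) from rfl, WithZero.coe_inj,
      ← ofAdd_zero, Multiplicative.ofAdd.apply_eq_iff_eq, neg_eq_zero] at this
  -- generators
  set π : HeightOneSpectrum (𝓞 K) → 𝓞 K := fun v => (hPID.principal v.asIdeal).generator with hπ_def
  have hgen : ∀ v : HeightOneSpectrum (𝓞 K), v.asIdeal = Ideal.span {π v} := by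
    intro v
    haveI := hPID.principal v.asIdeal
    exact (Ideal.span_singleton_generator _).symm
  have hπ0 : ∀ v, π v ≠ 0 := by
    intro v hv
    apply v.ne_bot
    rw [hgen v, hv, Ideal.span_singleton_eq_bot]
  have hπK0 : ∀ v, algebraMap (𝓞 K) K (π v) ≠ 0 := by
    intro v
    rw [map_ne_zero_iff _ (IsFractionRing.injective (𝓞 K) K)]
    exact hπ0 v
  refine ⟨∏ v ∈ hS.toFinset, (algebraMap (𝓞 K) K (π v)) ^ (n v), ?_, ?_⟩
  · exact Finset.prod_ne_zero_iff.2 fun v _ => zpow_ne_zero _ (hπK0 v)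
  · intro w
    rw [map_prod]
    have hfac : ∀ v ∈ hS.toFinset, v ≠ w →
        w.valuation K ((algebraMap (𝓞 K) K (π v)) ^ (n v)) = 1 := by
      intro v _ hvw
      rw [map_zpow₀, HeightOneSpectrum.valuation_of_algebraMap,
        gen_intValuation_eq_one (Ne.symm hvw) (hgen v), one_zpow]
    have hfacw : w.valuation K ((algebraMap (𝓞 K) K (π w)) ^ (n w))
        = (Multiplicative.ofAdd (-(n w)) : Multiplicative ℤ) := by
      rw [map_zpow₀, HeightOneSpectrum.valuation_of_algebraMap,
        w.intValuation_singleton (hπ0 w) (hgen w),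
        WithZero.exp, ← WithZero.coe_zpow, WithZero.coe_inj]
      rw [← ofAdd_zsmul, smul_neg, smul_eq_mul, mul_one]
    by_cases hw : w ∈ hS.toFinset
    · rw [Finset.prod_eq_single_of_mem w hw (fun v hv hvw => hfac v hv hvw), hfacw, hn w]
    · rw [Finset.prod_eq_one (fun v hv => hfac v hv (fun h => hw (h ▸ hv))), hn w,
        hn0 w hw]
      rfl

private lemma key_decomp (K : Type*) [Field K] [NumberField K] (x : (AdeleRing (𝓞 K) K)ˣ) (k : K)
    (hk0 : k ≠ 0)
    (hval : ∀ w : HeightOneSpectrum (𝓞 K),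
      w.valuation K k = Valued.v (((x : AdeleRing (𝓞 K) K).2 : (v : HeightOneSpectrum (𝓞 K)) → v.adicCompletion K) w))
    (hpos : ∀ (v : InfinitePlace K) (hv : v.IsReal),
      0 < InfinitePlace.Completion.extensionEmbeddingOfIsReal hv
        (((x : AdeleRing (𝓞 K) K).1 * algebraMap K (InfiniteAdeleRing K) k⁻¹) v)) :
    ∃ kk ∈ KDiag K, ∃ a ∈ KInfPlus K, ∃ o ∈ OhatStar K, x = kk * a * o := by
  have hx1 : (x : AdeleRing (𝓞 K) K).1 * ((x⁻¹ : (AdeleRing (𝓞 K) K)ˣ) : AdeleRing (𝓞 K) K).1 = 1 :=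
    congrArg Prod.fst x.val_inv
  have hx2 : (x : AdeleRing (𝓞 K) K).2 * ((x⁻¹ : (AdeleRing (𝓞 K) K)ˣ) : AdeleRing (𝓞 K) K).2 = 1 :=
    congrArg Prod.snd x.val_inv
  have hI1 : algebraMap K (InfiniteAdeleRing K) k⁻¹ * algebraMap K (InfiniteAdeleRing K) k = 1 := by
    rw [← map_mul, inv_mul_cancel₀ hk0, map_one]
  have hF1 : algebraMap K (FiniteAdeleRing (𝓞 K) K) k⁻¹
      * algebraMap K (FiniteAdeleRing (𝓞 K) K) k = 1 := by
    rw [← map_mul, inv_mul_cancel₀ hk0, map_one]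
  -- the three factors
  set ku : Kˣ := Units.mk0 k hk0 with hku
  set kA : (AdeleRing (𝓞 K) K)ˣ := Units.map (algebraMap K (AdeleRing (𝓞 K) K)).toMonoidHom ku with hkA
  have haval : ((x : AdeleRing (𝓞 K) K).1 * algebraMap K (InfiniteAdeleRing K) k⁻¹, 1)
      * (((x⁻¹ : (AdeleRing (𝓞 K) K)ˣ) : AdeleRing (𝓞 K) K).1 * algebraMap K (InfiniteAdeleRing K) k,
        (1 : FiniteAdeleRing (𝓞 K) K)) = (1 : AdeleRing (𝓞 K) K) := by
    show ((_, _) : InfiniteAdeleRing K × FiniteAdeleRing (𝓞 K) K) * (_, _) = (1 : InfiniteAdeleRing K × FiniteAdeleRing (𝓞 K) K)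
    rw [Prod.mk_mul_mk, mul_mul_mul_comm, hx1, hI1, one_mul, mul_one]
    rfl
  set a : (AdeleRing (𝓞 K) K)ˣ :=
    ⟨((x : AdeleRing (𝓞 K) K).1 * algebraMap K (InfiniteAdeleRing K) k⁻¹, 1),
     (((x⁻¹ : (AdeleRing (𝓞 K) K)ˣ) : AdeleRing (𝓞 K) K).1 * algebraMap K (InfiniteAdeleRing K) k, 1),
     haval, (mul_comm _ _).trans haval⟩ with ha
  have hoval : ((1 : InfiniteAdeleRing K),
        (x : AdeleRing (𝓞 K) K).2 * algebraMap K (FiniteAdeleRing (𝓞 K) K) k⁻¹)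
      * (1, ((x⁻¹ : (AdeleRing (𝓞 K) K)ˣ) : AdeleRing (𝓞 K) K).2 * algebraMap K (FiniteAdeleRing (𝓞 K) K) k)
      = (1 : AdeleRing (𝓞 K) K) := by
    show ((_, _) : InfiniteAdeleRing K × FiniteAdeleRing (𝓞 K) K) * (_, _) = (1 : InfiniteAdeleRing K × FiniteAdeleRing (𝓞 K) K)
    rw [Prod.mk_mul_mk, mul_mul_mul_comm, hx2, hF1, one_mul, mul_one]
    rfl
  set o : (AdeleRing (𝓞 K) K)ˣ :=
    ⟨(1, (x : AdeleRing (𝓞 K) K).2 * algebraMap K (FiniteAdeleRing (𝓞 K) K) k⁻¹),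
     (1, ((x⁻¹ : (AdeleRing (𝓞 K) K)ˣ) : AdeleRing (𝓞 K) K).2 * algebraMap K (FiniteAdeleRing (𝓞 K) K) k),
     hoval, (mul_comm _ _).trans hoval⟩ with ho
  refine ⟨kA, ⟨ku, rfl⟩, a, ⟨rfl, hpos⟩, o, ⟨rfl, ?_⟩, ?_⟩
  · -- OhatStar membership
    intro v
    set y : v.adicCompletion K :=
      ((((x : AdeleRing (𝓞 K) K).2 * algebraMap K (FiniteAdeleRing (𝓞 K) K) k⁻¹ :
        FiniteAdeleRing (𝓞 K) K)) : (v : HeightOneSpectrum (𝓞 K)) → v.adicCompletion K) v with hy_def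
    set z : v.adicCompletion K :=
      (((((x⁻¹ : (AdeleRing (𝓞 K) K)ˣ) : AdeleRing (𝓞 K) K).2 * algebraMap K (FiniteAdeleRing (𝓞 K) K) k :
        FiniteAdeleRing (𝓞 K) K)) : (v : HeightOneSpectrum (𝓞 K)) → v.adicCompletion K) v with hz_def
    have hy2 : y = (((x : AdeleRing (𝓞 K) K).2 : (v : HeightOneSpectrum (𝓞 K)) → v.adicCompletion K) v)
        * (((k⁻¹ : K) : v.adicCompletion K)) := rfl
    have hxvne : ((x : AdeleRing (𝓞 K) K).2 : (v : HeightOneSpectrum (𝓞 K)) → v.adicCompletion K) v ≠ 0 :=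
      left_ne_zero_of_mul_eq_one (congrFun (congrArg Subtype.val hx2) v)
    have hyz : y * z = 1 :=
      congrFun (congrArg Subtype.val (congrArg Prod.snd hoval)) v
    have hyv : (Valued.v y : WithZero (Multiplicative ℤ)) = 1 := by
      rw [hy2, Valuation.map_mul, HeightOneSpectrum.valuedAdicCompletion_eq_valuation',
        map_inv₀, hval v]
      exact mul_inv_cancel₀ ((Valuation.ne_zero_iff _).2 hxvne)
    have hzv : (Valued.v z : WithZero (Multiplicative ℤ)) = 1 := by
      have := congrArg (Valued.v : v.adicCompletion K → WithZero (Multiplicative ℤ)) hyz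
      rw [Valuation.map_mul, hyv, one_mul, Valuation.map_one] at this
      exact this
    exact ⟨⟨⟨y, le_of_eq hyv⟩, ⟨z, le_of_eq hzv⟩, Subtype.ext hyz,
      Subtype.ext (by rw [mul_comm] at hyz; exact hyz)⟩, rfl⟩
  · -- the product identity
    refine Units.ext (Prod.ext ?_ ?_)
    · show (x : AdeleRing (𝓞 K) K).1 = algebraMap K (InfiniteAdeleRing K) k
        * ((x : AdeleRing (𝓞 K) K).1 * algebraMap K (InfiniteAdeleRing K) k⁻¹) * 1
      rw [mul_one, mul_comm ((x : AdeleRing (𝓞 K) K).1), ← mul_assoc,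
        mul_comm _ (algebraMap K (InfiniteAdeleRing K) k⁻¹), hI1, one_mul]
    · show (x : AdeleRing (𝓞 K) K).2 = algebraMap K (FiniteAdeleRing (𝓞 K) K) k * 1
        * ((x : AdeleRing (𝓞 K) K).2 * algebraMap K (FiniteAdeleRing (𝓞 K) K) k⁻¹)
      rw [mul_one, mul_comm ((x : AdeleRing (𝓞 K) K).2), ← mul_assoc,
        mul_comm _ (algebraMap K (FiniteAdeleRing (𝓞 K) K) k⁻¹), hF1, one_mul]

end Helpers

/-- if the class number of `K` is `1` and `K` has at most one real place,
then `𝔸_K^× = K^× · K_{∞,+}^× · 𝔬̂^*`: every idele is a product of a diagonally embedded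
element of `K^×`, an element of `K_{∞,+}^×`, and an element of `𝔬̂^*`. -/
theorem ideles_eq_KDiag_mul_KInfPlus_mul_OhatStar (K : Type*) [Field K] [NumberField K]
    (hclass : NumberField.classNumber K = 1)
    (hreal : Nat.card {v : InfinitePlace K // v.IsReal} ≤ 1) :
    ∀ x : (AdeleRing (𝓞 K) K)ˣ, ∃ k ∈ KDiag K, ∃ a ∈ KInfPlus K, ∃ o ∈ OhatStar K,
      x = k * a * o := by
  intro x
  have hPID : IsPrincipalIdealRing (𝓞 K) := classNumber_eq_one_iff.mp hclass
  obtain ⟨k₀, hk0, hkv⟩ := exists_valuation_match K hPID (x : AdeleRing (𝓞 K) K).2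
    ((x⁻¹ : (AdeleRing (𝓞 K) K)ˣ) : AdeleRing (𝓞 K) K).2 (congrArg Prod.snd x.val_inv)
  by_cases hex : ∃ v : InfinitePlace K, v.IsReal
  · obtain ⟨v₀, hv₀⟩ := hex
    haveI hsub : Subsingleton {v : InfinitePlace K // v.IsReal} :=
      Finite.card_le_one_iff_subsingleton.mp hreal
    have hplace : ∀ (v : InfinitePlace K), v.IsReal → v = v₀ := by
      intro v hv
      exact congrArg Subtype.val (Subsingleton.elim (⟨v, hv⟩ : {v : InfinitePlace K // v.IsReal})
        ⟨v₀, hv₀⟩)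
    set r : ℝ := InfinitePlace.Completion.extensionEmbeddingOfIsReal hv₀
        (((x : AdeleRing (𝓞 K) K).1 * algebraMap K (InfiniteAdeleRing K) k₀⁻¹) v₀) with hr_def
    have hr0 : r ≠ 0 := by
      intro h
      have hcomp : ((x : AdeleRing (𝓞 K) K).1 * algebraMap K (InfiniteAdeleRing K) k₀⁻¹) v₀
          * ((((x⁻¹ : (AdeleRing (𝓞 K) K)ˣ) : AdeleRing (𝓞 K) K).1
            * algebraMap K (InfiniteAdeleRing K) k₀) v₀) = 1 := by
        have h1 : ((x : AdeleRing (𝓞 K) K).1 * algebraMap K (InfiniteAdeleRing K) k₀⁻¹)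
            * (((x⁻¹ : (AdeleRing (𝓞 K) K)ˣ) : AdeleRing (𝓞 K) K).1
              * algebraMap K (InfiniteAdeleRing K) k₀) = 1 := by
          have hx1 : (x : AdeleRing (𝓞 K) K).1 * ((x⁻¹ : (AdeleRing (𝓞 K) K)ˣ) : AdeleRing (𝓞 K) K).1 = 1 :=
            congrArg Prod.fst x.val_inv
          rw [mul_mul_mul_comm, hx1, ← map_mul, inv_mul_cancel₀ hk0, map_one, one_mul]
        exact congrFun h1 v₀
      have hne := left_ne_zero_of_mul_eq_one hcomp
      exact hne ((InfinitePlace.Completion.extensionEmbeddingOfIsReal hv₀).injective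
        (h.trans (map_zero _).symm))
    by_cases hrpos : 0 < r
    · refine key_decomp K x k₀ hk0 hkv ?_
      intro v hv
      obtain rfl : v = v₀ := hplace v hv
      exact hrpos
    · refine key_decomp K x (-k₀) (neg_ne_zero.2 hk0) ?_ ?_
      · intro w
        rw [Valuation.map_neg]
        exact hkv w
      · intro v hv
        obtain rfl : v = v₀ := hplace v hv
        have halg : algebraMap K (InfiniteAdeleRing K) (-k₀)⁻¹
            = - algebraMap K (InfiniteAdeleRing K) k₀⁻¹ := by
          rw [inv_neg, map_neg]
        rw [halg, mul_neg]
        have : ((-((x : AdeleRing (𝓞 K) K).1 * algebraMap K (InfiniteAdeleRing K) k₀⁻¹)) v)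
            = -(((x : AdeleRing (𝓞 K) K).1 * algebraMap K (InfiniteAdeleRing K) k₀⁻¹) v) := rfl
        rw [this, map_neg]
        exact neg_pos.2 (lt_of_le_of_ne (not_lt.1 hrpos) hr0)
  · refine key_decomp K x k₀ hk0 hkv ?_
    exact fun v hv => absurd ⟨v, hv⟩ hex
end
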